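/- arXiv:1401.0334 — 5 statements merged into one kernel-verified Lean document; each statement's English description precedes it below -/
import Mathlib

section
/- Let X be a real Banach space, D a symmetric dictionary in X, and E : X → ℝ a uniformly smooth convex Fréchet differentiable function such that E(x+uy) − E(x) − u⟨E'(x),y⟩ ≤ 2μ(u) for all x ∈ D_2 := {z ∈ X : E(z) ≤ E(0)+2}, all y with ‖y‖ = 1, and all |u| ≤ 1, where μ : [0,1] → [0,∞) satisfies μ(u) = o(u) as u → 0. Assume the set D_C := {x ∈ X : E(x) ≤ E(0) + C} is bounded for every finite C, and assume the coefficient sequence C = (c_j) with c_j ∈ [0,1] satisfies Σ_{k=1}^∞ c_k = ∞ and Σ_{k=1}^∞ μ(c_k) ≤ 1. Then every realization (G_m) of the EGA(C) satisfies lim_{m→∞} E(G_m) = inf_{x ∈ X} E(x). -/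
open Set Filter

variable {X : Type*} [NormedAddCommGroup X] [NormedSpace ℝ X] [CompleteSpace X]

/-- `A1 D` is the closure (in `X`) of the convex hull of the dictionary `D`. -/
def A1 (D : Set X) : Set X := closure (convexHull ℝ D)

/-- A symmetric dictionary: all elements have norm one, the set is symmetric,
and its closed linear span is all of `X`. -/
def SymmetricDictionary (D : Set X) : Prop :=
  (∀ g ∈ D, ‖g‖ = 1) ∧ (∀ g ∈ D, -g ∈ D) ∧
    closure (Submodule.span ℝ D : Set X) = Set.univ

/-- The modulus of smoothness of `E` on a set `S`:
`ρ(E,S,u) = (1/2) sup {|E(x+uy)+E(x-uy)-2E(x)| : x ∈ S, ‖y‖ = 1}`. -/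
noncomputable def modSmooth (E : X → ℝ) (S : Set X) (u : ℝ) : ℝ :=
  sSup {r : ℝ | ∃ x ∈ S, ∃ y : X, ‖y‖ = 1 ∧
    r = |E (x + u • y) + E (x - u • y) - 2 * E x| / 2}

/-- `E` is uniformly smooth on `S` if `ρ(E,S,u)/u → 0` as `u → 0+`. -/
def UniformlySmoothOn (E : X → ℝ) (S : Set X) : Prop :=
  Filter.Tendsto (fun u => modSmooth E S u / u) (nhdsWithin 0 (Set.Ioi 0)) (nhds 0)

/-!
The greedy choice and the smoothness bound give, for every `g ∈ D`,
`E(G_{m+1}) ≤ E(G_m) + c_{m+1} E'(G_m) g + 2μ(c_{m+1})`. Taking `±g` shows that the iterates stay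
in `D₂`, that `E(G_m)` decreases up to the summable errors `2μ(c_{m+1})` and hence converges to
some `α`, and that `c_{m+1} |E'(G_m) g| ≤ Δ_m := E(G_m) - E(G_{m+1}) + 2μ(c_{m+1})`, where `Δ` is
summable. If `E y < α` for some `y = ∑ aᵢ gᵢ` in the span of `D`, convexity gives
`c_{m+1} (E(G_m) - E y) ≤ c_{m+1} E'(G_m) (G_m - y) ≤ (∑ |aᵢ| + S_m) Δ_m` with
`S_m = c_1 + ⋯ + c_m`, so eventually `Δ_m ≳ c_{m+1} / (B + S_m)` with `B = 1 + ∑ |aᵢ|`. This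
contradicts `∑ c_k = ∞`, because `∑_{k<m} c_{k+1} / (B + S_k) ≥ log (B + S_m) - log B`. Density
of the span and continuity of `E` then give `α = inf E`.
-/

open Topology

theorem tendsto_sum_div_add_partialSum_atTop {a : ℕ → ℝ} (ha : ∀ n, 0 ≤ a n)
    (hS : Tendsto (fun n => ∑ k ∈ Finset.range n, a k) atTop atTop) {b : ℝ} (hb : 0 < b) :
    Tendsto (fun n => ∑ k ∈ Finset.range n, a k / (b + ∑ j ∈ Finset.range k, a j))
      atTop atTop := by
  set S : ℕ → ℝ := fun n => ∑ k ∈ Finset.range n, a k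
  have hpos : ∀ n, 0 < b + S n := fun n => by
    have : 0 ≤ S n := Finset.sum_nonneg fun k _ => ha k
    linarith
  -- `log x ≤ x - 1` bounds each term below by an increment of `log (b + S n)`
  have hlog : ∀ n, Real.log (b + S (n + 1)) - Real.log (b + S n) ≤ a n / (b + S n) := by
    intro n
    have h := Real.log_le_sub_one_of_pos (div_pos (hpos (n + 1)) (hpos n))
    rw [Real.log_div (hpos (n + 1)).ne' (hpos n).ne'] at h
    have hsucc : S (n + 1) = S n + a n := Finset.sum_range_succ a n
    have hquot : (b + S (n + 1)) / (b + S n) - 1 = a n / (b + S n) := by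
      rw [hsucc, div_sub_one (hpos n).ne']
      ring
    rwa [hquot] at h
  have htel : ∀ n, Real.log (b + S n) - Real.log b ≤
      ∑ k ∈ Finset.range n, a k / (b + S k) := by
    intro n
    have h := Finset.sum_range_sub (fun k => Real.log (b + S k)) n
    simp only [S, Finset.range_zero, Finset.sum_empty, add_zero] at h
    rw [← h]
    exact Finset.sum_le_sum fun k _ => hlog k
  refine tendsto_atTop_mono htel ?_
  exact tendsto_atTop_add_const_right _ _
    (Real.tendsto_log_atTop.comp (tendsto_atTop_add_const_left _ b hS))

theorem exists_tendsto_of_le_add_of_summable {u ε : ℕ → ℝ} (hu : BddBelow (range u))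
    (hε : Summable ε) (hstep : ∀ n, u (n + 1) ≤ u n + ε n) :
    ∃ α, Tendsto u atTop (𝓝 α) := by
  set S : ℕ → ℝ := fun n => ∑ k ∈ Finset.range n, ε k
  have hS : Tendsto S atTop (𝓝 (∑' k, ε k)) := hε.hasSum.tendsto_sum_nat
  obtain ⟨L, hL⟩ := hu
  obtain ⟨K, hK⟩ := hS.bddAbove_range
  have hanti : Antitone (fun n => u n - S n) := antitone_nat_of_succ_le fun n => by
    have := hstep n
    simp only [S, Finset.sum_range_succ]
    linarith
  have hbdd : BddBelow (range fun n => u n - S n) := ⟨L - K, by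
    rintro _ ⟨n, rfl⟩
    linarith [hL ⟨n, rfl⟩, hK ⟨n, rfl⟩]⟩
  refine ⟨_, ((tendsto_atTop_ciInf hanti hbdd).add hS).congr fun n => ?_⟩
  simp

theorem summable_sub_succ_add_of_le_add {u ε : ℕ → ℝ} (hu : BddBelow (range u))
    (hε : Summable ε) (hstep : ∀ n, u (n + 1) ≤ u n + ε n) :
    Summable fun n => u n - u (n + 1) + ε n := by
  obtain ⟨L, hL⟩ := hu
  obtain ⟨K, hK⟩ := hε.hasSum.tendsto_sum_nat.bddAbove_range
  refine summable_of_sum_range_le (c := u 0 - L + K) (fun n => by linarith [hstep n]) fun n => ?_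
  rw [Finset.sum_add_distrib, Finset.sum_range_sub']
  linarith [hL ⟨n, rfl⟩, hK ⟨n, rfl⟩]

section

variable {V : Type*} [NormedAddCommGroup V] [NormedSpace ℝ V]
  {D : Set V} {E : V → ℝ} {E' : V → V →L[ℝ] ℝ} {c ε Δ : ℕ → ℝ} {G φ : ℕ → V}

theorem ConvexOn.add_fderiv_sub_le {f : V → ℝ} (hf : ConvexOn ℝ univ f) {f' : V →L[ℝ] ℝ}
    {x : V} (hx : HasFDerivAt f f' x) (y : V) : f x + f' (y - x) ≤ f y := by
  let ℓ : ℝ →ᵃ[ℝ] V := AffineMap.lineMap x y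
  have hℓ : HasDerivAt ℓ (y - x) 0 := AffineMap.hasDerivAt_lineMap
  have hderiv : HasDerivAt (f ∘ ℓ) (f' (y - x)) 0 :=
    (by simpa [ℓ] using hx : HasFDerivAt f f' (ℓ 0)).comp_hasDerivAt 0 hℓ
  have hslope := (hf.comp_affineMap ℓ).le_slope_of_hasDerivAt (mem_univ 0) (mem_univ 1)
    one_pos hderiv
  simp [slope_def_field, ℓ] at hslope
  linarith [f'.map_sub y x]

theorem ConvexOn.bddBelow_range_of_isBounded_sublevel {f : V → ℝ} (hf : ConvexOn ℝ univ f)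
    {f' : V →L[ℝ] ℝ} (h0 : HasFDerivAt f f' 0) {C : ℝ}
    (hC : Bornology.IsBounded {x | f x ≤ C}) : BddBelow (range f) := by
  obtain ⟨R, hR⟩ := hC.subset_closedBall 0
  refine ⟨min C (f 0 - ‖f'‖ * R), ?_⟩
  rintro _ ⟨x, rfl⟩
  rcases le_or_gt (f x) C with hx | hx
  · have hxR : ‖x‖ ≤ R := mem_closedBall_zero_iff.mp (hR hx)
    have hgrad := hf.add_fderiv_sub_le h0 x
    rw [sub_zero] at hgrad
    have hbound : -(‖f'‖ * R) ≤ f' x :=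
      neg_le_of_abs_le (((f'.le_opNorm x).trans (by gcongr)))
    exact min_le_of_right_le (by linarith)
  · exact min_le_of_left_le hx.le

theorem abs_apply_sum_smul_le {ι : Type*} (F : V →L[ℝ] ℝ) (s : Finset ι) (a : ι → ℝ)
    (v : ι → V) {K : ℝ} (hK : ∀ i ∈ s, |F (v i)| ≤ K) :
    |F (∑ i ∈ s, a i • v i)| ≤ (∑ i ∈ s, |a i|) * K := by
  rw [map_sum, Finset.sum_mul]
  refine (Finset.abs_sum_le_sum_abs _ _).trans (Finset.sum_le_sum fun i hi => ?_)
  rw [map_smul, smul_eq_mul, abs_mul]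
  exact mul_le_mul_of_nonneg_left (hK i hi) (abs_nonneg _)

theorem exists_mem_apply_nonpos_of_neg_mem (hD : ∀ g ∈ D, -g ∈ D) (hDne : D.Nonempty)
    (F : V →L[ℝ] ℝ) : ∃ g ∈ D, F g ≤ 0 := by
  obtain ⟨g, hg⟩ := hDne
  rcases le_total (F g) 0 with h | h
  · exact ⟨g, hg, h⟩
  · exact ⟨-g, hD g hg, by rw [map_neg]; linarith⟩

theorem descent_of_descent_on_sublevel (hD : ∀ g ∈ D, -g ∈ D) (hDne : D.Nonempty)
    (hc : ∀ m, 0 ≤ c m) {C : ℝ} (hεC : ∀ m, ∑ k ∈ Finset.range m, ε k ≤ C)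
    (hstep : ∀ m, E (G m) ≤ E (G 0) + C →
      ∀ g ∈ D, E (G (m + 1)) ≤ E (G m) + c m * E' (G m) g + ε m) :
    ∀ m, ∀ g ∈ D, E (G (m + 1)) ≤ E (G m) + c m * E' (G m) g + ε m := by
  have henergy : ∀ m, E (G m) ≤ E (G 0) + ∑ k ∈ Finset.range m, ε k := by
    intro m
    induction m with
    | zero => simp
    | succ m ih =>
      obtain ⟨g, hg, hneg⟩ := exists_mem_apply_nonpos_of_neg_mem hD hDne (E' (G m))
      have := hstep m (ih.trans (by linarith [hεC m])) g hg
      rw [Finset.sum_range_succ]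
      nlinarith [hc m]
  exact fun m => hstep m ((henergy m).trans (by linarith [hεC m]))

theorem abs_mul_apply_le_of_descent (hD : ∀ g ∈ D, -g ∈ D)
    (hstep : ∀ m, ∀ g ∈ D, E (G (m + 1)) ≤ E (G m) + c m * E' (G m) g + ε m) (m : ℕ)
    {g : V} (hg : g ∈ D) : |c m * E' (G m) g| ≤ E (G m) - E (G (m + 1)) + ε m := by
  have hneg := hstep m (-g) (hD g hg)
  rw [map_neg, mul_neg] at hneg
  rw [abs_le]
  constructor <;> linarith [hstep m g hg]

theorem mul_sub_le_of_mem_span (hE : ConvexOn ℝ univ E) (hE' : ∀ x, HasFDerivAt E (E' x) x)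
    (hc : ∀ m, 0 ≤ c m) (hφ : ∀ m, φ m ∈ D) (hG : ∀ m, G m = ∑ j ∈ Finset.range m, c j • φ j)
    (hgain : ∀ m, ∀ g ∈ D, |c m * E' (G m) g| ≤ Δ m) {ι : Type*} (s : Finset ι) (a : ι → ℝ)
    {v : ι → V} (hv : ∀ i ∈ s, v i ∈ D) (m : ℕ) :
    c m * (E (G m) - E (∑ i ∈ s, a i • v i)) ≤
      (∑ i ∈ s, |a i| + ∑ j ∈ Finset.range m, c j) * Δ m := by
  set y := ∑ i ∈ s, a i • v i
  have hgrad := hE.add_fderiv_sub_le (hE' (G m)) y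
  have hGm : c m * E' (G m) (G m) ≤ (∑ j ∈ Finset.range m, c j) * Δ m := by
    have h := abs_apply_sum_smul_le (c m • E' (G m)) (Finset.range m) c φ
      fun j _ => hgain m (φ j) (hφ j)
    simp only [abs_of_nonneg (hc _), ← hG] at h
    exact (le_abs_self _).trans h
  have hy : -(c m * E' (G m) y) ≤ (∑ i ∈ s, |a i|) * Δ m :=
    (neg_le_abs _).trans (abs_apply_sum_smul_le (c m • E' (G m)) s a v
      fun i hi => hgain m (v i) (hv i hi))
  rw [map_sub] at hgrad
  nlinarith [hc m]

theorem le_of_mem_span_of_tendsto (hE : ConvexOn ℝ univ E)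
    (hE' : ∀ x, HasFDerivAt E (E' x) x) (hc : ∀ m, 0 ≤ c m)
    (hdiv : Tendsto (fun n => ∑ k ∈ Finset.range n, c k) atTop atTop) (hφ : ∀ m, φ m ∈ D)
    (hG : ∀ m, G m = ∑ j ∈ Finset.range m, c j • φ j)
    (hgain : ∀ m, ∀ g ∈ D, |c m * E' (G m) g| ≤ Δ m) (hΔ : Summable Δ) {α : ℝ}
    (hlim : Tendsto (fun m => E (G m)) atTop (𝓝 α)) {y : V} (hy : y ∈ Submodule.span ℝ D) :
    α ≤ E y := by
  by_contra! hyα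
  obtain ⟨n, a, v, rfl⟩ := Submodule.mem_span_set'.mp hy
  set B := 1 + ∑ i, |a i|
  set S : ℕ → ℝ := fun m => ∑ j ∈ Finset.range m, c j
  have hB : 0 < B := by positivity
  have hpos : ∀ m, 0 < B + S m := fun m => by
    have : 0 ≤ S m := Finset.sum_nonneg fun j _ => hc j
    linarith
  set η := α - E (∑ i, a i • (v i : V))
  have hη : 0 < η := sub_pos.mpr hyα
  have hrate : ∀ᶠ m in atTop, c m / (B + S m) ≤ 2 / η * Δ m := by
    filter_upwards [hlim.eventually (eventually_ge_nhds (by linarith : α - η / 2 < α))]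
      with m hm
    have hΔm : 0 ≤ Δ m := (abs_nonneg _).trans (hgain m (φ m) (hφ m))
    have h := mul_sub_le_of_mem_span hE hE' hc hφ hG hgain Finset.univ a
      (fun i _ => (v i).2) m
    have hcη : c m * (η / 2) ≤ (B + S m) * Δ m := by nlinarith [hc m]
    rw [div_le_iff₀ (hpos m)]
    field_simp
    linarith
  have hsum : Summable fun m => c m / (B + S m) :=
    (hΔ.mul_left (2 / η)).of_norm_bounded_eventually_nat (by
      filter_upwards [hrate] with m hm
      rwa [Real.norm_of_nonneg (div_nonneg (hc m) (hpos m).le)])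
  exact (summable_iff_not_tendsto_nat_atTop_of_nonneg fun m => div_nonneg (hc m) (hpos m).le).mp
    hsum (tendsto_sum_div_add_partialSum_atTop hc hdiv hB)

theorem tendsto_sInf_range_of_descent (hE : ConvexOn ℝ univ E)
    (hE' : ∀ x, HasFDerivAt E (E' x) x) (hlow : BddBelow (range E))
    (hD : ∀ g ∈ D, -g ∈ D) (hDspan : closure (Submodule.span ℝ D : Set V) = univ)
    (hc : ∀ m, 0 ≤ c m) (hdiv : Tendsto (fun n => ∑ k ∈ Finset.range n, c k) atTop atTop)
    (hε : Summable ε) (hφ : ∀ m, φ m ∈ D) (hG : ∀ m, G m = ∑ j ∈ Finset.range m, c j • φ j)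
    (hstep : ∀ m, ∀ g ∈ D, E (G (m + 1)) ≤ E (G m) + c m * E' (G m) g + ε m) :
    Tendsto (fun m => E (G m)) atTop (𝓝 (sInf (range E))) := by
  have hgain := abs_mul_apply_le_of_descent hD hstep
  have hdesc : ∀ m, E (G (m + 1)) ≤ E (G m) + ε m := fun m => by
    linarith [(abs_nonneg _).trans (hgain m (hφ m))]
  obtain ⟨α, hα⟩ := exists_tendsto_of_le_add_of_summable
    (hlow.mono (range_comp_subset_range G E)) hε hdesc
  have hspan : ∀ y ∈ Submodule.span ℝ D, α ≤ E y := fun y hy =>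
    le_of_mem_span_of_tendsto hE hE' hc hdiv hφ hG (fun m _ hg => hgain m hg)
      (summable_sub_succ_add_of_le_add (hlow.mono (range_comp_subset_range G E)) hε hdesc) hα hy
  have hall : ∀ x, α ≤ E x := by
    have hclosed : IsClosed {x | α ≤ E x} :=
      isClosed_le continuous_const (continuous_iff_continuousAt.mpr fun x => (hE' x).continuousAt)
    intro x
    have hx : x ∈ closure (Submodule.span ℝ D : Set V) := hDspan ▸ mem_univ x
    exact hclosed.closure_subset_iff.mpr hspan hx
  have hinf : sInf (range E) = α :=
    le_antisymm (ge_of_tendsto' hα fun m => csInf_le hlow ⟨G m, rfl⟩)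
      (le_csInf (range_nonempty E) (forall_mem_range.mpr hall))
  rwa [hinf]

end

theorem ega_c_converges_general
    (D : Set X) (hD : SymmetricDictionary D)
    (E : X → ℝ) (hEconv : ConvexOn ℝ Set.univ E)
    (E' : X → X →L[ℝ] ℝ) (hE' : ∀ x : X, HasFDerivAt E (E' x) x)
    (μ : ℝ → ℝ) (hμ0 : ∀ u ∈ Set.Icc (0 : ℝ) 1, 0 ≤ μ u)
    (hsmooth : ∀ x : X, E x ≤ E 0 + 2 → ∀ y : X, ‖y‖ = 1 → ∀ u : ℝ, |u| ≤ 1 →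
      E (x + u • y) - E x - u * E' x y ≤ 2 * μ u)
    (hbdd : ∀ Cb : ℝ, Bornology.IsBounded {x : X | E x ≤ E 0 + Cb})
    (cseq : ℕ → ℝ) (hcseq : ∀ k : ℕ, 1 ≤ k → cseq k ∈ Set.Icc (0 : ℝ) 1)
    (hdiv : Filter.Tendsto (fun n => ∑ k ∈ Finset.range n, cseq (k + 1))
      Filter.atTop Filter.atTop)
    (hμsum : Summable (fun k : ℕ => μ (cseq (k + 1))) ∧
      (∑' k : ℕ, μ (cseq (k + 1))) ≤ 1)
    (G φ : ℕ → X) (hG0 : G 0 = 0)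
    (hstep : ∀ m : ℕ, 1 ≤ m →
      φ m ∈ D ∧
      E (G (m - 1) + cseq m • φ m) =
        sInf {r : ℝ | ∃ g ∈ D, r = E (G (m - 1) + cseq m • g)} ∧
      G m = G (m - 1) + cseq m • φ m) :
    Filter.Tendsto (fun m => E (G m)) Filter.atTop
      (nhds (sInf (Set.range E))) := by
  obtain ⟨hDnorm, hDsymm, hDspan⟩ := hD
  have hstep' (m : ℕ) := hstep (m + 1) m.succ_pos
  simp only [Nat.add_sub_cancel] at hstep'
  have hc (m : ℕ) : cseq (m + 1) ∈ Icc (0 : ℝ) 1 := hcseq (m + 1) m.succ_pos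
  have hlow : BddBelow (range E) := hEconv.bddBelow_range_of_isBounded_sublevel (hE' 0) (hbdd 0)
  have hG (m : ℕ) : G m = ∑ j ∈ Finset.range m, cseq (j + 1) • φ (j + 1) := by
    induction m with
    | zero => simp [hG0]
    | succ m ih => rw [(hstep' m).2.2, ih, Finset.sum_range_succ]
  have hgreedy (m : ℕ) (g : X) (hg : g ∈ D) :
      E (G (m + 1)) ≤ E (G m + cseq (m + 1) • g) := by
    rw [(hstep' m).2.2, (hstep' m).2.1]
    exact csInf_le (hlow.mono (by rintro _ ⟨g', -, rfl⟩; exact mem_range_self _)) ⟨g, hg, rfl⟩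
  have hμsum_le (m : ℕ) : ∑ k ∈ Finset.range m, 2 * μ (cseq (k + 1)) ≤ 2 := by
    rw [← Finset.mul_sum]
    linarith [hμsum.1.sum_le_tsum (Finset.range m) (fun k _ => hμ0 _ (hc k)), hμsum.2]
  -- The lemmas index the steps from `0`: their `c m`, `φ m` are `cseq (m + 1)`, `φ (m + 1)`.
  refine tendsto_sInf_range_of_descent hEconv hE' hlow hDsymm hDspan (fun m => (hc m).1) hdiv
    (hμsum.1.mul_left 2) (fun m => (hstep' m).1) hG ?_
  refine descent_of_descent_on_sublevel hDsymm ⟨_, (hstep' 0).1⟩ (fun m => (hc m).1) hμsum_le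
    fun m hm g hg => ?_
  rw [hG0] at hm
  have hu : |cseq (m + 1)| ≤ 1 := abs_le.mpr ⟨by linarith [(hc m).1], (hc m).2⟩
  linarith [hgreedy m g hg, hsmooth (G m) hm g (hDnorm g hg) _ hu]

/-- Let `E` be a uniformly smooth convex Fréchet differentiable
function with `E(x+uy) - E(x) - u⟨E'(x),y⟩ ≤ 2μ(u)` on
`D₂ = {x : E x ≤ E 0 + 2}` for `‖y‖ = 1`, `|u| ≤ 1`, where `μ(u) = o(u)`.
If every sublevel set `D_C` is bounded and the coefficients `c_j ∈ [0,1]`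
satisfy `Σ c_k = ∞` and `Σ μ(c_k) ≤ 1`, then every realization of EGA(C)
satisfies `lim E (G m) = inf_X E`. -/
theorem ega_c_converges
    (D : Set X) (hD : SymmetricDictionary D)
    (E : X → ℝ) (hEconv : ConvexOn ℝ Set.univ E)
    (E' : X → X →L[ℝ] ℝ) (hE' : ∀ x : X, HasFDerivAt E (E' x) x)
    (hEsm : UniformlySmoothOn E Set.univ)
    (μ : ℝ → ℝ) (hμ0 : ∀ u ∈ Set.Icc (0 : ℝ) 1, 0 ≤ μ u)
    (hμo : Filter.Tendsto (fun u => μ u / u) (nhdsWithin 0 (Set.Ioi 0)) (nhds 0))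
    (hsmooth : ∀ x : X, E x ≤ E 0 + 2 → ∀ y : X, ‖y‖ = 1 → ∀ u : ℝ, |u| ≤ 1 →
      E (x + u • y) - E x - u * E' x y ≤ 2 * μ u)
    (hbdd : ∀ Cb : ℝ, Bornology.IsBounded {x : X | E x ≤ E 0 + Cb})
    (cseq : ℕ → ℝ) (hcseq : ∀ k : ℕ, 1 ≤ k → cseq k ∈ Set.Icc (0 : ℝ) 1)
    (hdiv : Filter.Tendsto (fun n => ∑ k ∈ Finset.range n, cseq (k + 1))
      Filter.atTop Filter.atTop)
    (hμsum : Summable (fun k : ℕ => μ (cseq (k + 1))) ∧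
      (∑' k : ℕ, μ (cseq (k + 1))) ≤ 1)
    (G φ : ℕ → X) (hG0 : G 0 = 0)
    (hstep : ∀ m : ℕ, 1 ≤ m →
      φ m ∈ D ∧
      E (G (m - 1) + cseq m • φ m) =
        sInf {r : ℝ | ∃ g ∈ D, r = E (G (m - 1) + cseq m • g)} ∧
      G m = G (m - 1) + cseq m • φ m) :
    Filter.Tendsto (fun m => E (G m)) Filter.atTop
      (nhds (sInf (Set.range E))) :=
  ega_c_converges_general D hD E hEconv E' hE' μ hμ0 hsmooth hbdd cseq hcseq hdiv hμsum G φ hG0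
    hstep
end

section
/- Let c > 0 and p > 0, and let (a_m)_{m≥0} be a sequence of nonnegative real numbers satisfying a_m ≤ a_{m−1}(1 − c·a_{m−1}^p) for all m ≥ 1. Then there exists a constant C depending only on p and c such that a_n ≤ C·n^{−1/p} for all n ≥ 1. -/
/-!
Set `b m = a m ^ (-p)`. By the Bernoulli-type bound `(1 - t) ^ (-p) ≥ 1 + p t`, one step of the
recursion increases `b` by at least `c p`, so `b n ≥ c p n` as long as the sequence has not hit
`0`; inverting gives `a n ≤ (c p) ^ (-1/p) n ^ (-1/p)`.
-/

open Real

theorem one_add_mul_le_one_sub_rpow_neg {p t : ℝ} (hp : 0 ≤ p) (ht : t < 1) :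
    1 + p * t ≤ (1 - t) ^ (-p) := by
  have hlog : log (1 - t) ≤ -t := by linarith [log_le_sub_one_of_pos (sub_pos.2 ht)]
  calc 1 + p * t ≤ log (1 - t) * -p + 1 := by nlinarith
    _ ≤ exp (log (1 - t) * -p) := add_one_le_exp _
    _ = (1 - t) ^ (-p) := (rpow_def_of_pos (sub_pos.2 ht) _).symm

theorem rpow_neg_add_le_rpow_neg_of_le_mul_one_sub {c p x y : ℝ} (hp : 0 ≤ p) (hx : 0 < x)
    (hy : 0 < y) (hxy : y ≤ x * (1 - c * x ^ p)) : x ^ (-p) + c * p ≤ y ^ (-p) := by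
  have ht : c * x ^ p < 1 := by
    by_contra! h
    nlinarith [mul_nonpos_of_nonneg_of_nonpos hx.le (sub_nonpos.2 h)]
  have hxp : x ^ (-p) * x ^ p = 1 := by
    rw [rpow_neg hx.le, inv_mul_cancel₀ (rpow_pos_of_pos hx p).ne']
  calc x ^ (-p) + c * p = x ^ (-p) * (1 + p * (c * x ^ p)) := by
        linear_combination (-(c * p)) * hxp
    _ ≤ x ^ (-p) * (1 - c * x ^ p) ^ (-p) := by
      gcongr
      exact one_add_mul_le_one_sub_rpow_neg hp ht
    _ = (x * (1 - c * x ^ p)) ^ (-p) := (mul_rpow hx.le (by linarith)).symm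
    _ ≤ y ^ (-p) := rpow_le_rpow_of_nonpos hy hxy (neg_nonpos.2 hp)

theorem eq_zero_or_mul_le_rpow_neg_of_le_mul_one_sub {c p : ℝ} (hp : 0 ≤ p) {a : ℕ → ℝ}
    (ha : ∀ m, 0 ≤ a m) (hrec : ∀ m, a (m + 1) ≤ a m * (1 - c * a m ^ p)) (n : ℕ) :
    a n = 0 ∨ c * p * n ≤ a n ^ (-p) := by
  induction n with
  | zero => exact Or.inr (by simpa using rpow_nonneg (ha 0) (-p))
  | succ m ih =>
    rcases (ha (m + 1)).eq_or_lt with hzero | hpos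
    · exact Or.inl hzero.symm
    have hprev : 0 < a m := by
      refine (ha m).lt_of_ne' fun h => hpos.not_ge ?_
      simpa [h] using hrec m
    have hstep := rpow_neg_add_le_rpow_neg_of_le_mul_one_sub hp hprev hpos (hrec m)
    have hprev_bound := ih.resolve_left hprev.ne'
    refine Or.inr ?_
    push_cast
    linarith

theorem le_rpow_neg_inv_of_le_rpow_neg {p x y : ℝ} (hp : 0 < p) (hx : 0 < x) (hy : 0 < y)
    (h : y ≤ x ^ (-p)) : x ≤ y ^ (-(1 / p)) := by
  rw [one_div, ← inv_neg]
  exact (le_rpow_inv_iff_of_neg hx hy (neg_neg_of_pos hp)).2 h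

/-- If a nonnegative sequence satisfies
`a m ≤ a (m-1) * (1 - c * a (m-1) ^ p)` for all `m ≥ 1`, then
`a n ≤ C * n ^ (-1/p)` for all `n ≥ 1`, with `C` depending only on `p` and `c`. -/
theorem decay_lemma (c p : ℝ) (hc : 0 < c) (hp : 0 < p) :
    ∃ C : ℝ, 0 < C ∧
      ∀ a : ℕ → ℝ, (∀ m : ℕ, 0 ≤ a m) →
        (∀ m : ℕ, 1 ≤ m → a m ≤ a (m - 1) * (1 - c * a (m - 1) ^ p)) →
        ∀ n : ℕ, 1 ≤ n → a n ≤ C * (n : ℝ) ^ (-(1 / p)) := by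
  refine ⟨(c * p) ^ (-(1 / p)), by positivity, fun a ha hrec n hn => ?_⟩
  have hrec' : ∀ m, a (m + 1) ≤ a m * (1 - c * a m ^ p) := fun m => by
    simpa using hrec (m + 1) (by omega)
  have hcpn : 0 < c * p * n := by
    have : (0 : ℝ) < n := by exact_mod_cast hn
    positivity
  rcases (ha n).eq_or_lt with hzero | hpos
  · rw [← hzero]
    positivity
  have hbound := (eq_zero_or_mul_le_rpow_neg_of_le_mul_one_sub hp.le ha hrec' n).resolve_left
    hpos.ne'
  calc a n ≤ (c * p * n) ^ (-(1 / p)) := le_rpow_neg_inv_of_le_rpow_neg hp hpos hcpn hbound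
    _ = (c * p) ^ (-(1 / p)) * (n : ℝ) ^ (-(1 / p)) := mul_rpow (by positivity) n.cast_nonneg
end

section
/- Let q ∈ (1,2], δ ∈ (0,1], v > 0, B > 0, and set N := ⌊δ^{−1/q}⌋. Suppose a_0, a_1, …, a_N is a sequence of nonnegative real numbers satisfying a_m ≤ a_{m−1} + inf_{0 ≤ λ ≤ 1} ( −λ v a_{m−1} + B λ^q ) + δ for all 1 ≤ m ≤ N. Then there exists a constant C depending only on q, v, B, and a_0 such that a_m ≤ C·m^{1−q} for all 1 ≤ m ≤ N. -/
/-!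
Taking `λ = 3 / (v m)` in the infimum (admissible once `m ≥ 3 / v`) and using `δ ≤ m ^ (-q)`,
which is what `m ≤ ⌊δ ^ (-1/q)⌋` says, turns the recursion into
`a m ≤ (1 - 3 / m) a (m - 1) + D m ^ (-q)`. As `q ≤ 2`, the factor `1 - 3 / m` more than
compensates the growth of `(m - 1) ^ (1 - q)` to `m ^ (1 - q)`, so the bound `C m ^ (1 - q)`
propagates by induction. For the finitely many `m ≤ max 3 ⌈3 / v⌉` the crude bound
`a m ≤ a 0 + m δ ≤ |a 0| + 1` suffices.
-/

open Set

lemma sub_one_mul_rpow_one_sub_le {q x : ℝ} (hq : q ≤ 2) (hx : 1 ≤ x) :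
    (x - 1) * (x - 1) ^ (1 - q) ≤ x * x ^ (1 - q) := by
  have hx1 : 0 ≤ x - 1 := by linarith
  rcases hx1.eq_or_lt with h | h
  · rw [← h, zero_mul]; positivity
  · have mul_rpow_eq (y : ℝ) (hy : 0 < y) : y * y ^ (1 - q) = y ^ (2 - q) := by
      rw [show 2 - q = 1 + (1 - q) by ring, Real.rpow_add hy, Real.rpow_one]
    rw [mul_rpow_eq _ h, mul_rpow_eq _ (by linarith)]
    exact Real.rpow_le_rpow hx1 (by linarith) (by linarith)

lemma one_sub_three_div_mul_add_rpow_neg_le {q x C D : ℝ} (hq : q ≤ 2) (hx : 3 ≤ x)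
    (hC : 0 ≤ C) (hD : D ≤ 2 * C) :
    (1 - 3 / x) * (C * (x - 1) ^ (1 - q)) + D * x ^ (-q) ≤ C * x ^ (1 - q) := by
  have hx0 : 0 < x := by linarith
  set P := x ^ (1 - q)
  set Q := (x - 1) ^ (1 - q)
  have hP : 0 < P := by positivity
  have hPQ : (x - 1) * Q ≤ x * P := sub_one_mul_rpow_one_sub_le hq (by linarith)
  have hneg : x ^ (-q) = P / x := by
    rw [show -q = (1 - q) - 1 by ring, Real.rpow_sub_one hx0.ne']
  have hQ : (x - 3) * Q ≤ (x - 2) * P := by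
    have : (x - 1) * ((x - 3) * Q) ≤ (x - 1) * ((x - 2) * P) := by nlinarith
    exact le_of_mul_le_mul_left this (by linarith)
  rw [hneg, ← mul_le_mul_iff_of_pos_left hx0]
  rw [show x * ((1 - 3 / x) * (C * Q) + D * (P / x)) = C * ((x - 3) * Q) + D * P by
    field_simp]
  nlinarith [mul_le_mul_of_nonneg_left hQ hC]

lemma le_mul_rpow_one_sub_of_le {q x M A C b : ℝ} (hq : q ≤ 2) (hx : 1 ≤ x) (hxM : x ≤ M)
    (hA : 0 ≤ A) (hC : A * M ≤ C) (hb : b ≤ A) : b ≤ C * x ^ (1 - q) := by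
  have hx0 : 0 < x := by linarith
  calc b ≤ A * x ^ (2 - q) :=
        hb.trans (le_mul_of_one_le_right hA (Real.one_le_rpow hx (by linarith)))
    _ = A * x * x ^ (1 - q) := by
        rw [show 2 - q = 1 + (1 - q) by ring, Real.rpow_add hx0, Real.rpow_one, mul_assoc]
    _ ≤ C * x ^ (1 - q) := by gcongr; nlinarith

lemma le_mul_rpow_one_sub_of_le_one_sub_three_div {q C D : ℝ} {M N : ℕ} {a : ℕ → ℝ}
    (hq : q ≤ 2) (hM : 3 ≤ M) (hC : 0 ≤ C) (hD : D ≤ 2 * C)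
    (hbase : ∀ m, 1 ≤ m → m ≤ M → m ≤ N → a m ≤ C * (m : ℝ) ^ (1 - q))
    (hstep : ∀ m, M < m → m ≤ N → a m ≤ (1 - 3 / m) * a (m - 1) + D * (m : ℝ) ^ (-q)) :
    ∀ m, 1 ≤ m → m ≤ N → a m ≤ C * (m : ℝ) ^ (1 - q) := by
  intro m hm
  induction m, hm using Nat.le_induction with
  | base => exact hbase 1 le_rfl (by omega)
  | succ n hn ih =>
    intro hN
    rcases le_or_gt (n + 1) M with hnM | hnM
    · exact hbase _ (by omega) hnM hN
    have hx : (3 : ℝ) ≤ (n + 1 : ℕ) := by exact_mod_cast hM.trans hnM.le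
    have hcoef : 0 ≤ 1 - 3 / ((n + 1 : ℕ) : ℝ) := by
      rw [sub_nonneg, div_le_one (by linarith)]; exact hx
    have ih' : a n ≤ C * (((n + 1 : ℕ) : ℝ) - 1) ^ (1 - q) := by
      simpa using ih (by omega)
    calc a (n + 1) ≤ (1 - 3 / ((n + 1 : ℕ) : ℝ)) * a n + D * ((n + 1 : ℕ) : ℝ) ^ (-q) :=
          hstep _ hnM hN
      _ ≤ (1 - 3 / ((n + 1 : ℕ) : ℝ)) * (C * (((n + 1 : ℕ) : ℝ) - 1) ^ (1 - q))
            + D * ((n + 1 : ℕ) : ℝ) ^ (-q) := by gcongr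
      _ ≤ C * ((n + 1 : ℕ) : ℝ) ^ (1 - q) :=
          one_sub_three_div_mul_add_rpow_neg_le hq hx hC hD

lemma sInf_neg_mul_add_rpow_le {q v B a l : ℝ} (hv : 0 ≤ v) (hB : 0 ≤ B) (ha : 0 ≤ a)
    (hl : l ∈ Icc (0 : ℝ) 1) :
    sInf {r : ℝ | ∃ l ∈ Icc (0 : ℝ) 1, r = -(l * v * a) + B * l ^ q} ≤
      -(l * v * a) + B * l ^ q := by
  refine csInf_le ⟨-(v * a), ?_⟩ ⟨l, hl, rfl⟩
  rintro r ⟨l, ⟨hl0, hl1⟩, rfl⟩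
  have hlva : l * (v * a) ≤ v * a := mul_le_of_le_one_left (by positivity) hl1
  have hBl : 0 ≤ B * l ^ q := by positivity
  linarith

lemma rpow_mul_le_one_of_le_floor_rpow {q δ : ℝ} {m : ℕ} (hq : 0 < q) (hδ : 0 < δ)
    (hm : m ≤ ⌊δ ^ (-(1 / q))⌋₊) : (m : ℝ) ^ q * δ ≤ 1 := by
  have hmδ : (m : ℝ) ≤ δ ^ (-(1 / q)) :=
    (Nat.cast_le.2 hm).trans (Nat.floor_le (by positivity))
  have hmq : (m : ℝ) ^ q ≤ δ⁻¹ := by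
    calc (m : ℝ) ^ q ≤ (δ ^ (-(1 / q))) ^ q := by gcongr
      _ = δ⁻¹ := by
        rw [← Real.rpow_mul hδ.le, show -(1 / q) * q = -1 by field_simp, Real.rpow_neg_one]
  rwa [← le_div_iff₀ hδ, one_div]

lemma le_add_mul_of_le_add {a : ℕ → ℝ} {δ : ℝ} {N : ℕ}
    (h : ∀ m, 1 ≤ m → m ≤ N → a m ≤ a (m - 1) + δ) :
    ∀ m ≤ N, a m ≤ a 0 + m * δ := by
  intro m
  induction m with
  | zero => simp
  | succ n ih =>
    intro hn
    have hstep := h (n + 1) (by omega) hn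
    simp only [Nat.add_sub_cancel] at hstep
    push_cast
    linarith [ih (by omega)]

lemma le_one_sub_three_div_mul_add_rpow_neg {q v B x δ a a' : ℝ} (hv : 0 < v) (hx : 3 / v ≤ x)
    (hδ : x ^ q * δ ≤ 1)
    (h : ∀ l ∈ Icc (0 : ℝ) 1, a' ≤ a + (-(l * v * a) + B * l ^ q) + δ) :
    a' ≤ (1 - 3 / x) * a + (B * (3 / v) ^ q + 1) * x ^ (-q) := by
  have hx0 : 0 < x := (by positivity : (0:ℝ) < 3 / v).trans_le hx
  have hl : 3 / (v * x) ∈ Icc (0 : ℝ) 1 := by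
    refine ⟨by positivity, ?_⟩
    rw [div_le_one (by positivity)]
    rwa [div_le_iff₀ hv, mul_comm] at hx
  have hlq : (3 / (v * x)) ^ q = (3 / v) ^ q * x ^ (-q) := by
    rw [← div_div, Real.div_rpow (by positivity) hx0.le, Real.rpow_neg hx0.le, div_eq_mul_inv]
  have hδ' : δ ≤ x ^ (-q) := by
    rw [Real.rpow_neg hx0.le, ← one_div, le_div_iff₀ (by positivity), mul_comm]
    exact hδ
  have hchoice := h _ hl
  rw [hlq, show 3 / (v * x) * v * a = 3 / x * a by field_simp] at hchoice
  linarith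

/-- If a nonnegative finite sequence `a 0, …, a N`, with
`N := ⌊δ^(-1/q)⌋`, satisfies
`a m ≤ a (m-1) + inf_{0 ≤ λ ≤ 1} (-λ v a (m-1) + B λ^q) + δ` for `1 ≤ m ≤ N`,
then `a m ≤ C m^(1-q)` for `1 ≤ m ≤ N`, with `C` depending only on `q, v, B, a 0`. -/
theorem sequence_lemma (q v B a0 : ℝ) (hq1 : 1 < q) (hq2 : q ≤ 2)
    (hv : 0 < v) (hB : 0 < B) :
    ∃ C : ℝ, 0 < C ∧
      ∀ δ : ℝ, 0 < δ → δ ≤ 1 →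
        ∀ a : ℕ → ℝ, a 0 = a0 →
          (∀ m : ℕ, m ≤ Nat.floor (δ ^ (-(1 / q))) → 0 ≤ a m) →
          (∀ m : ℕ, 1 ≤ m → m ≤ Nat.floor (δ ^ (-(1 / q))) →
            a m ≤ a (m - 1) +
              sInf {r : ℝ | ∃ l ∈ Set.Icc (0 : ℝ) 1,
                r = -(l * v * a (m - 1)) + B * l ^ q} + δ) →
          ∀ m : ℕ, 1 ≤ m → m ≤ Nat.floor (δ ^ (-(1 / q))) →
            a m ≤ C * (m : ℝ) ^ (1 - q) := by
  set M := max 3 ⌈3 / v⌉₊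
  set D := B * (3 / v) ^ q + 1
  have hD : 0 ≤ D := by positivity
  have hA : 0 ≤ (|a0| + 1) * M := by positivity
  refine ⟨(|a0| + 1) * M + D, by positivity, fun δ hδ _ a ha0 hpos hrec => ?_⟩
  set N := ⌊δ ^ (-(1 / q))⌋₊
  have hδN (m : ℕ) (hm : m ≤ N) : (m : ℝ) ^ q * δ ≤ 1 :=
    rpow_mul_le_one_of_le_floor_rpow (by linarith) hδ hm
  have hrec_le (m : ℕ) (hm1 : 1 ≤ m) (hmN : m ≤ N) (l : ℝ) (hl : l ∈ Icc (0 : ℝ) 1) :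
      a m ≤ a (m - 1) + (-(l * v * a (m - 1)) + B * l ^ q) + δ :=
    (hrec m hm1 hmN).trans <| by
      gcongr; exact sInf_neg_mul_add_rpow_le hv.le hB.le (hpos _ (by omega)) hl
  have hcrude := le_add_mul_of_le_add fun m hm1 hmN => by
    simpa [Real.zero_rpow (by linarith : q ≠ 0)] using
      hrec_le m hm1 hmN 0 ⟨le_rfl, zero_le_one⟩
  refine le_mul_rpow_one_sub_of_le_one_sub_three_div (M := M) (D := D) hq2 (le_max_left _ _)
    (by positivity) (by linarith) (fun m hm1 hmM hmN => ?_) (fun m hMm hmN => ?_)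
  · have hm : (1 : ℝ) ≤ m := by exact_mod_cast hm1
    refine le_mul_rpow_one_sub_of_le (M := M) (A := |a0| + 1) hq2 hm (by exact_mod_cast hmM)
      (by positivity) (by linarith) ?_
    have hmδ : (m : ℝ) * δ ≤ 1 :=
      (mul_le_mul_of_nonneg_right (Real.self_le_rpow_of_one_le hm hq1.le) hδ.le).trans (hδN m hmN)
    linarith [hcrude m hmN, le_abs_self a0]
  · have hvm : 3 / v ≤ m :=
      (Nat.le_ceil _).trans (by exact_mod_cast (le_max_right _ _).trans hMm.le)
    exact le_one_sub_three_div_mul_add_rpow_neg hv hvm (hδN m hmN) (hrec_le m (by omega) hmN)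
end

section
/- Let X be a real Banach space, D a symmetric dictionary in X, and E : X → ℝ a convex Fréchet differentiable function. Let A > 0 and f ∈ L_A := {g ∈ X : g/A ∈ A1(D)}. Let c_1, …, c_k ∈ ℝ, φ_1, …, φ_k ∈ D, and G_k := Σ_{j=1}^k c_j φ_j. Then E_D(G_k) ≥ (E(G_k) − E(f)) / (A + A_k), where E_D(G) := sup_{g ∈ D} ⟨−E'(G), g⟩ and A_k := Σ_{j=1}^k |c_j|. -/
open Set Filter

variable {X : Type*} [NormedAddCommGroup X] [NormedSpace ℝ X] [CompleteSpace X]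

/-!
Put `F := -E'(G_k)` and `s := E_D(G_k) = sup_D F`. Convexity gives
`E(G_k) - E(f) ≤ ⟨E'(G_k), G_k - f⟩ = F f - F G_k`. The half-space `{F ≤ s}` is closed and
convex, so it contains `A1(D)`, whence `F f ≤ A s`; since `D = -D`, also `|F φ| ≤ s` on `D`,
whence `-F G_k ≤ A_k s`.
-/

section

variable {V : Type*} [NormedAddCommGroup V] [NormedSpace ℝ V]

theorem ConvexOn.le_sub_of_hasFDerivAt {E : V → ℝ} (hE : ConvexOn ℝ univ E) {x : V}
    {L : V →L[ℝ] ℝ} (hL : HasFDerivAt E L x) (y : V) :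
    L (y - x) ≤ E y - E x := by
  have hline : ConvexOn ℝ univ (E ∘ AffineMap.lineMap (k := ℝ) x y) := by
    simpa using hE.comp_affineMap (AffineMap.lineMap x y)
  have hderiv : HasDerivAt (E ∘ AffineMap.lineMap (k := ℝ) x y) (L (y - x)) 0 := by
    refine HasFDerivAt.comp_hasDerivAt (0 : ℝ) ?_ AffineMap.hasDerivAt_lineMap
    simpa using hL
  simpa [slope_def_field] using
    hline.le_slope_of_hasDerivAt (mem_univ 0) (mem_univ 1) zero_lt_one hderiv

theorem ContinuousLinearMap.bddAbove_image_of_norm_le_one (L : V →L[ℝ] ℝ) {D : Set V}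
    (hD : ∀ g ∈ D, ‖g‖ ≤ 1) : BddAbove (L '' D) :=
  (L.lipschitz.isBounded_image (isBounded_iff_forall_norm_le.2 ⟨1, hD⟩)).bddAbove

theorem ContinuousLinearMap.le_of_mem_closure_convexHull {L : V →L[ℝ] ℝ} {D : Set V} {s : ℝ}
    (hs : ∀ g ∈ D, L g ≤ s) {x : V} (hx : x ∈ closure (convexHull ℝ D)) : L x ≤ s :=
  closure_minimal (convexHull_min hs (convex_halfSpace_le L.isLinear s))
    (isClosed_le L.continuous continuous_const) hx

theorem ContinuousLinearMap.le_mul_of_inv_smul_mem_closure_convexHull {L : V →L[ℝ] ℝ}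
    {D : Set V} {s A : ℝ} (hA : 0 < A) (hs : ∀ g ∈ D, L g ≤ s) {x : V}
    (hx : A⁻¹ • x ∈ closure (convexHull ℝ D)) : L x ≤ A * s := by
  have h := L.le_of_mem_closure_convexHull hs hx
  rw [map_smul, smul_eq_mul, inv_mul_le_iff₀ hA] at h
  exact h

theorem ContinuousLinearMap.abs_le_of_neg_mem {L : V →L[ℝ] ℝ} {D : Set V} {s : ℝ}
    (hs : ∀ g ∈ D, L g ≤ s) (hneg : ∀ g ∈ D, -g ∈ D) {g : V} (hg : g ∈ D) : |L g| ≤ s := by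
  have := hs _ (hneg g hg)
  rw [map_neg] at this
  exact abs_le.2 ⟨by linarith, hs g hg⟩

theorem ContinuousLinearMap.abs_sum_smul_le {L : V →L[ℝ] ℝ} {D : Set V} {s : ℝ}
    (hs : ∀ g ∈ D, L g ≤ s) (hneg : ∀ g ∈ D, -g ∈ D) {ι : Type*} [Fintype ι] (c : ι → ℝ)
    {φ : ι → V} (hφ : ∀ j, φ j ∈ D) : |L (∑ j, c j • φ j)| ≤ (∑ j, |c j|) * s := by
  rw [map_sum, Finset.sum_mul]
  refine (Finset.abs_sum_le_sum_abs _ _).trans (Finset.sum_le_sum fun j _ => ?_)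
  rw [map_smul, smul_eq_mul, abs_mul]
  exact mul_le_mul_of_nonneg_left (L.abs_le_of_neg_mem hs hneg (hφ j)) (abs_nonneg _)

end

/-- If `f ∈ L_A := {g : g/A ∈ A1(D)}` and
`G_k = Σ_{j=1}^k c_j φ_j` with `φ_j ∈ D`, then
`E_D(G_k) ≥ (E(G_k) - E(f)) / (A + A_k)` where
`E_D(G) := sup_{g ∈ D} ⟨-E'(G), g⟩` and `A_k := Σ |c_j|`. -/
theorem dictionary_norming_lemma
    (D : Set X) (hD : SymmetricDictionary D)
    (E : X → ℝ) (hEconv : ConvexOn ℝ Set.univ E)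
    (E' : X → X →L[ℝ] ℝ) (hE' : ∀ x : X, HasFDerivAt E (E' x) x)
    (A : ℝ) (hA : 0 < A) (f : X) (hf : A⁻¹ • f ∈ A1 D)
    (k : ℕ) (c : Fin k → ℝ) (φ : Fin k → X) (hφ : ∀ j, φ j ∈ D) :
    sSup {r : ℝ | ∃ g ∈ D, r = -(E' (∑ j, c j • φ j) g)} ≥
      (E (∑ j, c j • φ j) - E f) / (A + ∑ j, |c j|) := by
  set G := ∑ j, c j • φ j
  set F : X →L[ℝ] ℝ := -E' G
  have hset : {r : ℝ | ∃ g ∈ D, r = -(E' G g)} = F '' D := by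
    ext r
    simp [F, eq_comm]
  rw [hset]
  have hs : ∀ g ∈ D, F g ≤ sSup (F '' D) := fun g hg =>
    le_csSup (F.bddAbove_image_of_norm_le_one fun g hg => (hD.1 g hg).le) (mem_image_of_mem F hg)
  have hFf := F.le_mul_of_inv_smul_mem_closure_convexHull hA hs hf
  have hFG := (abs_le.1 (F.abs_sum_smul_le hs hD.2.1 c hφ)).1
  have hgrad := hEconv.le_sub_of_hasFDerivAt (hE' G) f
  have hFgrad : E' G (f - G) = F G - F f := by
    simp only [F, map_sub, neg_apply]
    ring
  rw [ge_iff_le, div_le_iff₀ (by positivity)]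
  linarith
end

section
/- Let α, β, A be positive real numbers with α < β ≤ 1, and let U be a positive integer. Let (a_n)_{n≥1} be a sequence of real numbers with a_1 < A such that: (i) for all n ≥ 2, a_n ≤ a_{n−1} + A(n−1)^{−α}; and (ii) whenever ν ≥ U and a_ν ≥ A ν^{−α}, one has a_{ν+1} ≤ a_ν (1 − β/ν). Then there exists a constant C = C(α, β, A, U) such that a_n ≤ C·n^{−α} for all n ≥ 1. -/
/-!
Condition (i) alone gives the crude bound `a n ≤ A n`, which is `≤ C n^(-α)` on the initial
segment `n ≤ N := max U 1` once `C ≥ A N^(1+α)`. Beyond `N` induct on `n`: if `a ν ≥ A ν^(-α)`,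
condition (ii) and the tangent-line bound `(1 + 1/ν)^(-α) ≥ 1 - α/ν ≥ 1 - β/ν` carry
`a ν ≤ C ν^(-α)` over to `ν + 1`; otherwise (i) gives
`a (ν+1) < 2 A ν^(-α) ≤ 2^(1+α) A (ν+1)^(-α)`.
-/

open Real

lemma one_sub_mul_le_one_add_rpow_neg {α t : ℝ} (hα : 0 ≤ α) (ht : -1 < t) :
    1 - α * t ≤ (1 + t) ^ (-α) := by
  have hlog : log (1 + t) ≤ t := by linarith [log_le_sub_one_of_pos (by linarith : 0 < 1 + t)]
  calc 1 - α * t ≤ log (1 + t) * -α + 1 := by nlinarith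
    _ ≤ (1 + t) ^ (-α) := by
      rw [rpow_def_of_pos (by linarith)]
      exact add_one_le_exp _

lemma rpow_neg_mul_one_sub_div_le {α β x : ℝ} (hα : 0 ≤ α) (hαβ : α ≤ β) (hx : 0 < x) :
    x ^ (-α) * (1 - β / x) ≤ (x + 1) ^ (-α) := by
  have hsplit : x + 1 = x * (1 + 1 / x) := by field_simp
  rw [hsplit, mul_rpow hx.le (by positivity)]
  gcongr
  calc 1 - β / x ≤ 1 - α * (1 / x) := by rw [mul_one_div]; gcongr
    _ ≤ (1 + 1 / x) ^ (-α) := one_sub_mul_le_one_add_rpow_neg hα (by linarith [one_div_pos.mpr hx])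

lemma rpow_neg_le_two_rpow_mul_add_one_rpow_neg {α x : ℝ} (hα : 0 ≤ α) (hx : 1 ≤ x) :
    x ^ (-α) ≤ 2 ^ α * (x + 1) ^ (-α) := by
  calc x ^ (-α) = 2 ^ α * (2 * x) ^ (-α) := by
        rw [mul_rpow zero_le_two (by linarith), ← mul_assoc, ← rpow_add zero_lt_two,
          add_neg_cancel, rpow_zero, one_mul]
    _ ≤ 2 ^ α * (x + 1) ^ (-α) := by
      gcongr 2 ^ α * ?_
      exact rpow_le_rpow_of_nonpos (by linarith) (by linarith) (by linarith)

lemma le_rpow_add_one_mul_rpow_neg {α x y : ℝ} (hα : 0 ≤ α) (hx : 0 < x) (hxy : x ≤ y) :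
    x ≤ y ^ (1 + α) * x ^ (-α) := by
  calc x = x ^ (1 + α) * x ^ (-α) := by rw [← rpow_add hx, add_neg_cancel_right, rpow_one]
    _ ≤ y ^ (1 + α) * x ^ (-α) := by gcongr

lemma le_mul_of_le_add_rpow_neg {α A : ℝ} {a : ℕ → ℝ} (hα : 0 ≤ α) (hA : 0 ≤ A) (h₁ : a 1 ≤ A)
    (hstep : ∀ n : ℕ, 1 ≤ n → a (n + 1) ≤ a n + A * (n : ℝ) ^ (-α)) :
    ∀ n : ℕ, 1 ≤ n → a n ≤ A * n := by
  intro n hn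
  induction n, hn using Nat.le_induction with
  | base => simpa using h₁
  | succ n hn ih =>
    have hpow : (n : ℝ) ^ (-α) ≤ 1 :=
      rpow_le_one_of_one_le_of_nonpos (by exact_mod_cast hn) (by linarith)
    calc a (n + 1) ≤ A * n + A * 1 := by nlinarith [hstep n hn]
      _ = A * ((n + 1 : ℕ) : ℝ) := by push_cast; ring

lemma le_rpow_neg_of_decay {α β A C : ℝ} {N : ℕ} {a : ℕ → ℝ} (hα : 0 ≤ α) (hαβ : α ≤ β)
    (hN : 1 ≤ N) (hβN : β ≤ N) (hA : 0 ≤ A) (hC : 2 ^ (1 + α) * A ≤ C)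
    (hstep : ∀ n : ℕ, N ≤ n → a (n + 1) ≤ a n + A * (n : ℝ) ^ (-α))
    (hdecay : ∀ n : ℕ, N ≤ n → A * (n : ℝ) ^ (-α) ≤ a n → a (n + 1) ≤ a n * (1 - β / n))
    (hN_le : a N ≤ C * (N : ℝ) ^ (-α)) :
    ∀ n : ℕ, N ≤ n → a n ≤ C * (n : ℝ) ^ (-α) := by
  intro n hn
  induction n, hn using Nat.le_induction with
  | base => exact hN_le
  | succ n hn ih =>
    have hn1 : (1 : ℝ) ≤ n := by exact_mod_cast hN.trans hn
    have hβn : β ≤ n := hβN.trans (by exact_mod_cast hn)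
    push_cast
    rcases le_or_gt (A * (n : ℝ) ^ (-α)) (a n) with hlarge | hsmall
    · have hC0 : 0 ≤ C := le_trans (by positivity) hC
      calc a (n + 1) ≤ a n * (1 - β / n) := hdecay n hn hlarge
        _ ≤ C * (n : ℝ) ^ (-α) * (1 - β / n) := by
          gcongr
          rw [sub_nonneg, div_le_one (by linarith)]
          exact hβn
        _ ≤ C * ((n : ℝ) + 1) ^ (-α) := by
          rw [mul_assoc]
          gcongr
          exact rpow_neg_mul_one_sub_div_le hα hαβ (by linarith)
    · calc a (n + 1) ≤ 2 * A * (n : ℝ) ^ (-α) := by linarith [hstep n hn]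
        _ ≤ 2 * A * (2 ^ α * ((n : ℝ) + 1) ^ (-α)) := by
          gcongr
          exact rpow_neg_le_two_rpow_mul_add_one_rpow_neg hα hn1
        _ = 2 ^ (1 + α) * A * ((n : ℝ) + 1) ^ (-α) := by
          rw [rpow_add zero_lt_two, rpow_one]; ring
        _ ≤ C * ((n : ℝ) + 1) ^ (-α) := by gcongr

theorem sequence_decay_lemma_general (α β A : ℝ) (U : ℕ)
    (hα : 0 < α) (hαβ : α < β) (hβ : β ≤ 1) (hA : 0 < A) :
    ∃ C : ℝ, 0 < C ∧
      ∀ a : ℕ → ℝ, a 1 < A →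
        (∀ n : ℕ, 2 ≤ n → a n ≤ a (n - 1) + A * ((n : ℝ) - 1) ^ (-α)) →
        (∀ ν : ℕ, U ≤ ν → A * (ν : ℝ) ^ (-α) ≤ a ν →
          a (ν + 1) ≤ a ν * (1 - β / (ν : ℝ))) →
        ∀ n : ℕ, 1 ≤ n → a n ≤ C * (n : ℝ) ^ (-α) := by
  set N := max U 1
  have hUN : U ≤ N := le_max_left U 1
  have h1N : 1 ≤ N := le_max_right U 1
  have hN : (1 : ℝ) ≤ N := by exact_mod_cast h1N
  refine ⟨2 ^ (1 + α) * A * (N : ℝ) ^ (1 + α), by positivity, fun a ha₁ hrec hdec => ?_⟩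
  have hstep (n : ℕ) (hn : 1 ≤ n) : a (n + 1) ≤ a n + A * (n : ℝ) ^ (-α) := by
    simpa using hrec (n + 1) (by omega)
  have hinitial (n : ℕ) (hn : 1 ≤ n) (hnN : n ≤ N) :
      a n ≤ 2 ^ (1 + α) * A * (N : ℝ) ^ (1 + α) * (n : ℝ) ^ (-α) := by
    calc a n ≤ A * n := le_mul_of_le_add_rpow_neg hα.le hA.le ha₁.le hstep n hn
      _ ≤ A * ((N : ℝ) ^ (1 + α) * (n : ℝ) ^ (-α)) := by
        gcongr
        exact le_rpow_add_one_mul_rpow_neg hα.le (by exact_mod_cast hn) (by exact_mod_cast hnN)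
      _ ≤ 2 ^ (1 + α) * (A * ((N : ℝ) ^ (1 + α) * (n : ℝ) ^ (-α))) :=
        le_mul_of_one_le_left (by positivity) (one_le_rpow one_le_two (by linarith))
      _ = 2 ^ (1 + α) * A * (N : ℝ) ^ (1 + α) * (n : ℝ) ^ (-α) := by ring
  intro n hn
  rcases le_total n N with hnN | hNn
  · exact hinitial n hn hnN
  · have hC : 2 ^ (1 + α) * A ≤ 2 ^ (1 + α) * A * (N : ℝ) ^ (1 + α) :=
      le_mul_of_one_le_right (by positivity) (one_le_rpow hN (by linarith))
    exact le_rpow_neg_of_decay hα.le hαβ.le h1N (hβ.trans hN) hA.le hC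
      (fun m hm => hstep m (h1N.trans hm)) (fun m hm => hdec m (hUN.trans hm))
      (hinitial N h1N le_rfl) n hNn

/-- Lemma on sequences: if `a 1 < A`, `a n ≤ a (n-1) + A (n-1)^(-α)`
for `n ≥ 2`, and whenever `ν ≥ U` and `a ν ≥ A ν^(-α)` one has
`a (ν+1) ≤ a ν (1 - β/ν)`, then `a n ≤ C n^(-α)` for all `n ≥ 1`,
with `C = C(α, β, A, U)`. -/
theorem sequence_decay_lemma (α β A : ℝ) (U : ℕ)
    (hα : 0 < α) (hαβ : α < β) (hβ : β ≤ 1) (hA : 0 < A) (hU : 0 < U) :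
    ∃ C : ℝ, 0 < C ∧
      ∀ a : ℕ → ℝ, a 1 < A →
        (∀ n : ℕ, 2 ≤ n → a n ≤ a (n - 1) + A * ((n : ℝ) - 1) ^ (-α)) →
        (∀ ν : ℕ, U ≤ ν → A * (ν : ℝ) ^ (-α) ≤ a ν →
          a (ν + 1) ≤ a ν * (1 - β / (ν : ℝ))) →
        ∀ n : ℕ, 1 ≤ n → a n ≤ C * (n : ℝ) ^ (-α) :=
  sequence_decay_lemma_general α β A U hα hαβ hβ hA
end
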